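/- Let H be symmetric positive definite, L satisfy Lᵀ H + H L = 0, let G = ∑_{k=0}^s a_k (hL)^k with energy coefficients b_k, and suppose b_k = 0 for 1 ≤ k ≤ m-1. Then for every u, ‖Gu‖_H² - ‖u‖_H² = ∑_{k=m}^{s} b_k h^{2k} ‖L^k u‖_H², so |E_{n+1} - E_n| ≤ ½ h^{2m} ∑_{k=m}^{s} |b_k| h^{2(k-m)} ‖L^k u‖_H², i.e., the one-step energy error is O(h^{2m}). -/

import Mathlib

/-!
Write `G = p(hL)` with `p(x) = ∑ a_k x^k`. Skew-adjointness of `L` with respect to `H` gives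
`(L^i)ᵀ H = (-1)^i H L^i`, hence `Gᵀ H G = H p(-hL) p(hL)`. The polynomial `p(-x) p(x)` is even
and its `x^{2k}`-coefficient is `(-1)^k b_k`; turning `(-1)^k H L^{2k}` back into
`(L^k)ᵀ H L^k` yields `Gᵀ H G = ∑_k b_k h^{2k} (L^k)ᵀ H L^k`. As `b_0 = a_0^2 = 1` and
`b_1, …, b_{m-1}` vanish, the energy change is the tail `k ≥ m`, whose quadratic forms are
nonnegative.
-/

open Matrix Finset

namespace Finset

theorem sum_range_sum_range_add_eq_sum_range_sum_Icc {M : Type*} [AddCommMonoid M]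
    (s : ℕ) (g : ℕ → ℕ → M) :
    ∑ i ∈ range (s + 1), ∑ j ∈ range (s + 1), g i (i + j) =
      ∑ p ∈ range (2 * s + 1), ∑ i ∈ Icc (p - s) (min p s), g i p := by
  simp_rw [range_eq_Ico, sum_Ico_add (g _)]
  refine sum_comm' fun i p => ?_
  simp only [mem_Ico, mem_Icc, le_min_iff]
  omega

theorem sum_range_two_mul_add_one_of_odd_eq_zero {M : Type*} [AddCommMonoid M]
    (s : ℕ) (T : ℕ → M) (hodd : ∀ p, Odd p → T p = 0) :
    ∑ p ∈ range (2 * s + 1), T p = ∑ k ∈ range (s + 1), T (2 * k) := by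
  induction s with
  | zero => simp
  | succ s ih =>
    rw [show 2 * (s + 1) + 1 = 2 * s + 1 + 1 + 1 by ring, sum_range_succ _ (2 * s + 1 + 1),
      sum_range_succ _ (2 * s + 1), ih, hodd _ (odd_two_mul_add_one s), add_zero,
      sum_range_succ (fun k => T (2 * k)) (s + 1)]
    rfl

theorem sum_range_succ_eq_add_sum_Icc_of_eq_zero {M : Type*} [AddCommMonoid M] {f : ℕ → M} {m : ℕ}
    (s : ℕ) (hm : 1 ≤ m) (hf : ∀ k, 1 ≤ k → k < m → f k = 0) :
    ∑ k ∈ range (s + 1), f k = f 0 + ∑ k ∈ Icc m s, f k := by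
  rw [range_eq_Ico, sum_eq_sum_Ico_succ_bot s.succ_pos]
  refine congrArg _ (sum_subset (fun k hk => ?_) fun k hk hk' => ?_).symm
  · simp only [mem_Icc, mem_Ico] at hk ⊢
    omega
  · simp only [mem_Icc, mem_Ico, not_and_or, not_le] at hk hk'
    exact hf k hk.1 (by omega)

end Finset

section EnergyCoeff

variable {R : Type*} [CommRing R]

theorem sum_Icc_neg_one_pow_mul_eq_zero_of_odd (s : ℕ) (c : ℕ → R) {p : ℕ} (hp : Odd p) :
    ∑ i ∈ Icc (p - s) (min p s), (-1) ^ i * c i * c (p - i) = 0 := by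
  refine sum_involution (fun i _ => p - i) (fun i hi => ?_) (fun i hi _ => ?_)
    (fun i hi => ?_) (fun i hi => ?_)
  all_goals simp only [mem_Icc, le_min_iff] at hi
  · have hp' : (-1 : R) ^ (p - i) * (-1) ^ i = -1 := by
      rw [← pow_add, Nat.sub_add_cancel hi.2.1, hp.neg_one_pow]
    have hi' : (-1 : R) ^ i * (-1) ^ i = 1 := by
      rw [← pow_add, Even.neg_one_pow ⟨i, rfl⟩]
    rw [Nat.sub_sub_self hi.2.1]
    linear_combination c i * c (p - i) * ((-1) ^ i * hp' - (-1) ^ (p - i) * hi')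
  · obtain ⟨k, rfl⟩ := hp
    omega
  · simp only [mem_Icc, le_min_iff]
    omega
  · omega

/-- `(-1)^k` times the coefficient of `x^{2k}` in `p(-x) p(x)`, where `p(x) = ∑_{i ≤ s} c_i x^i`. -/
def energyCoeff (s : ℕ) (c : ℕ → R) (k : ℕ) : R :=
  ∑ i ∈ Icc (2 * k - s) (min (2 * k) s), (-1) ^ (k + i) * c i * c (2 * k - i)

theorem energyCoeff_zero (s : ℕ) (c : ℕ → R) : energyCoeff s c 0 = c 0 ^ 2 := by
  simp [energyCoeff, sq]

theorem energyCoeff_mul_pow (s : ℕ) (c : ℕ → R) (h : R) (k : ℕ) :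
    energyCoeff s (fun i => c i * h ^ i) k = energyCoeff s c k * h ^ (2 * k) := by
  rw [energyCoeff, energyCoeff, sum_mul]
  refine sum_congr rfl fun i hi => ?_
  rw [← pow_mul_pow_sub h ((mem_Icc.mp hi).2.trans (min_le_left _ _))]
  ring

theorem sum_range_sum_range_neg_one_pow_smul_eq_sum_energyCoeff {M : Type*} [AddCommGroup M]
    [Module R M] (s : ℕ) (c : ℕ → R) (F : ℕ → M) :
    ∑ i ∈ range (s + 1), ∑ j ∈ range (s + 1), ((-1) ^ i * c i * c j) • F (i + j) =
      ∑ k ∈ range (s + 1), energyCoeff s c k • (-1 : R) ^ k • F (2 * k) := by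
  let g (i p : ℕ) : M := ((-1) ^ i * c i * c (p - i)) • F p
  calc _ = ∑ i ∈ range (s + 1), ∑ j ∈ range (s + 1), g i (i + j) := by
          simp only [g, Nat.add_sub_cancel_left]
    _ = ∑ p ∈ range (2 * s + 1), ∑ i ∈ Icc (p - s) (min p s), g i p :=
          sum_range_sum_range_add_eq_sum_range_sum_Icc s g
    _ = ∑ p ∈ range (2 * s + 1),
        (∑ i ∈ Icc (p - s) (min p s), (-1) ^ i * c i * c (p - i)) • F p := by
          simp only [g, sum_smul]
    _ = ∑ k ∈ range (s + 1),
        (∑ i ∈ Icc (2 * k - s) (min (2 * k) s), (-1) ^ i * c i * c (2 * k - i)) • F (2 * k) :=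
          sum_range_two_mul_add_one_of_odd_eq_zero s _ fun p hp => by
            rw [sum_Icc_neg_one_pow_mul_eq_zero_of_odd s c hp, zero_smul]
    _ = _ := sum_congr rfl fun k _ => by
          have hk : (-1 : R) ^ k * (-1) ^ k = 1 := by rw [← pow_add, Even.neg_one_pow ⟨k, rfl⟩]
          rw [smul_smul, energyCoeff, sum_mul]
          congr 1
          refine sum_congr rfl fun i _ => ?_
          linear_combination -(-1) ^ i * c i * c (2 * k - i) * hk

end EnergyCoeff

namespace Matrix

variable {ι R : Type*} [Fintype ι] [CommRing R]

theorem dotProduct_transpose_mul_mul_mulVec (M A N : Matrix ι ι R) (u v : ι → R) :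
    u ⬝ᵥ ((Mᵀ * A * N) *ᵥ v) = (M *ᵥ u) ⬝ᵥ (A *ᵥ (N *ᵥ v)) := by
  rw [← mulVec_mulVec, ← mulVec_mulVec, dotProduct_mulVec, vecMul_transpose]

namespace IsSkewAdjoint

variable [DecidableEq ι] {H L : Matrix ι ι R}

theorem transpose_pow_mul (hL : H.IsSkewAdjoint L) (k : ℕ) :
    (L ^ k)ᵀ * H = (-1 : R) ^ k • (H * L ^ k) := by
  have hsemi : SemiconjBy H (-L) Lᵀ := hL.symm
  rw [transpose_pow, ← (hsemi.pow_right k).eq, ← neg_one_smul R L, smul_pow, mul_smul_comm]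

theorem transpose_mul_mul_eq_sum_energyCoeff (hL : H.IsSkewAdjoint L) (s : ℕ) (c : ℕ → R) :
    (∑ i ∈ range (s + 1), c i • L ^ i)ᵀ * H * ∑ i ∈ range (s + 1), c i • L ^ i =
      ∑ k ∈ range (s + 1), energyCoeff s c k • ((L ^ k)ᵀ * H * L ^ k) := by
  have hpow (i j : ℕ) : (L ^ i)ᵀ * H * L ^ j = (-1 : R) ^ i • (H * L ^ (i + j)) := by
    rw [hL.transpose_pow_mul, smul_mul_assoc, mul_assoc, pow_add]
  calc _ = ∑ i ∈ range (s + 1), ∑ j ∈ range (s + 1),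
        ((-1) ^ i * c i * c j) • (H * L ^ (i + j)) := by
          rw [transpose_sum, sum_mul, sum_mul]
          refine sum_congr rfl fun i _ => ?_
          rw [mul_sum]
          refine sum_congr rfl fun j _ => ?_
          rw [transpose_smul, smul_mul_assoc, smul_mul_assoc, mul_smul_comm, hpow, smul_smul,
            smul_smul]
          congr 1
          ring
    _ = _ := (sum_range_sum_range_neg_one_pow_smul_eq_sum_energyCoeff s c
          fun p => H * L ^ p).trans <| by simp only [hpow, two_mul]

theorem dotProduct_mulVec_eq_sum_energyCoeff (hL : H.IsSkewAdjoint L) (s : ℕ) (a : ℕ → R)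
    (h : R) {G : Matrix ι ι R} (hG : G = ∑ k ∈ range (s + 1), a k • (h • L) ^ k) (u : ι → R) :
    (G *ᵥ u) ⬝ᵥ (H *ᵥ (G *ᵥ u)) =
      ∑ k ∈ range (s + 1),
        energyCoeff s a k * h ^ (2 * k) * ((L ^ k *ᵥ u) ⬝ᵥ (H *ᵥ (L ^ k *ᵥ u))) := by
  have hG' : G = ∑ k ∈ range (s + 1), (a k * h ^ k) • L ^ k :=
    hG.trans <| sum_congr rfl fun k _ => by rw [smul_pow, smul_smul]
  rw [hG', ← dotProduct_transpose_mul_mul_mulVec, hL.transpose_mul_mul_eq_sum_energyCoeff,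
    sum_mulVec, dotProduct_sum]
  refine sum_congr rfl fun k _ => ?_
  rw [smul_mulVec, dotProduct_smul, energyCoeff_mul_pow, dotProduct_transpose_mul_mul_mulVec,
    smul_eq_mul]

end IsSkewAdjoint

end Matrix

theorem abs_sum_Icc_mul_pow_two_mul_le {R : Type*} [CommRing R] [LinearOrder R]
    [IsStrictOrderedRing R] {b w : ℕ → R} (m s : ℕ) (h : R) (hw : ∀ k, 0 ≤ w k) :
    |∑ k ∈ Icc m s, b k * h ^ (2 * k) * w k| ≤
      h ^ (2 * m) * ∑ k ∈ Icc m s, |b k| * h ^ (2 * (k - m)) * w k := by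
  calc _ ≤ ∑ k ∈ Icc m s, |b k * h ^ (2 * k) * w k| := abs_sum_le_sum_abs _ _
    _ = ∑ k ∈ Icc m s, h ^ (2 * m) * (|b k| * h ^ (2 * (k - m)) * w k) :=
        sum_congr rfl fun k hk => by
          have hmk : 2 * m ≤ 2 * k := Nat.mul_le_mul_left 2 (mem_Icc.mp hk).1
          rw [abs_mul, abs_mul, abs_of_nonneg (hw k),
            abs_of_nonneg ((even_two_mul k).pow_nonneg h), ← pow_mul_pow_sub h hmk, Nat.mul_sub]
          ring
    _ = _ := (mul_sum _ _ _).symm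

theorem energy_error_order_general {n : ℕ}
    (H L : Matrix (Fin n) (Fin n) ℝ)
    (hH : H.PosDef)
    (hL : Lᵀ * H + H * L = 0)
    (s : ℕ) (a : ℕ → ℝ) (h : ℝ) (ha0 : a 0 = 1)
    (G : Matrix (Fin n) (Fin n) ℝ)
    (hG : G = ∑ k ∈ Finset.range (s + 1), a k • (h • L) ^ k)
    (b : ℕ → ℝ)
    (hb : ∀ k, b k = ∑ i ∈ Finset.Icc (max 0 (2 * k - s)) (min (2 * k) s),
      (-1 : ℝ) ^ (k + i) * a i * a (2 * k - i))
    (m : ℕ) (hm1 : 1 ≤ m)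
    (hbvanish : ∀ k, 1 ≤ k → k ≤ m - 1 → b k = 0)
    (u : Fin n → ℝ) :
    (G *ᵥ u) ⬝ᵥ (H *ᵥ (G *ᵥ u)) - u ⬝ᵥ (H *ᵥ u) =
        ∑ k ∈ Finset.Icc m s,
          b k * h ^ (2 * k) * ((L ^ k *ᵥ u) ⬝ᵥ (H *ᵥ (L ^ k *ᵥ u))) ∧
      |(1 / 2) * ((G *ᵥ u) ⬝ᵥ (H *ᵥ (G *ᵥ u))) - (1 / 2) * (u ⬝ᵥ (H *ᵥ u))| ≤
        (1 / 2) * h ^ (2 * m) *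
          ∑ k ∈ Finset.Icc m s,
            |b k| * h ^ (2 * (k - m)) * ((L ^ k *ᵥ u) ⬝ᵥ (H *ᵥ (L ^ k *ᵥ u))) := by
  obtain rfl : b = energyCoeff s a := funext fun k => by rw [hb, Nat.zero_max, energyCoeff]
  have hskew : H.IsSkewAdjoint L := by
    rw [Matrix.IsSkewAdjoint, IsAdjointPair, mul_neg, eq_neg_of_add_eq_zero_left hL]
  have hexp : (G *ᵥ u) ⬝ᵥ (H *ᵥ (G *ᵥ u)) - u ⬝ᵥ (H *ᵥ u) =
      ∑ k ∈ Icc m s, energyCoeff s a k * h ^ (2 * k) * ((L ^ k *ᵥ u) ⬝ᵥ (H *ᵥ (L ^ k *ᵥ u))) := by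
    rw [hskew.dotProduct_mulVec_eq_sum_energyCoeff s a h hG,
      sum_range_succ_eq_add_sum_Icc_of_eq_zero s hm1 fun k hk1 hkm => by
        rw [hbvanish k hk1 (by omega), zero_mul, zero_mul],
      energyCoeff_zero, ha0]
    simp
  refine ⟨hexp, ?_⟩
  rw [← mul_sub, hexp, abs_mul, abs_of_pos one_half_pos, mul_assoc]
  gcongr
  exact abs_sum_Icc_mul_pow_two_mul_le m s h fun k => by
    simpa using hH.posSemidef.dotProduct_mulVec_nonneg (L ^ k *ᵥ u)

theorem energy_error_order {n : ℕ}
    (H L : Matrix (Fin n) (Fin n) ℝ)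
    (hH : H.PosDef) (hHsymm : H.IsSymm)
    (hL : Lᵀ * H + H * L = 0)
    (s : ℕ) (a : ℕ → ℝ) (h : ℝ) (ha0 : a 0 = 1)
    (G : Matrix (Fin n) (Fin n) ℝ)
    (hG : G = ∑ k ∈ Finset.range (s + 1), a k • (h • L) ^ k)
    (b : ℕ → ℝ)
    (hb : ∀ k, b k = ∑ i ∈ Finset.Icc (max 0 (2 * k - s)) (min (2 * k) s),
      (-1 : ℝ) ^ (k + i) * a i * a (2 * k - i))
    (m : ℕ) (hm1 : 1 ≤ m)
    (hbvanish : ∀ k, 1 ≤ k → k ≤ m - 1 → b k = 0)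
    (u : Fin n → ℝ) :
    (G *ᵥ u) ⬝ᵥ (H *ᵥ (G *ᵥ u)) - u ⬝ᵥ (H *ᵥ u) =
        ∑ k ∈ Finset.Icc m s,
          b k * h ^ (2 * k) * ((L ^ k *ᵥ u) ⬝ᵥ (H *ᵥ (L ^ k *ᵥ u))) ∧
      |(1 / 2) * ((G *ᵥ u) ⬝ᵥ (H *ᵥ (G *ᵥ u))) - (1 / 2) * (u ⬝ᵥ (H *ᵥ u))| ≤
        (1 / 2) * h ^ (2 * m) *
          ∑ k ∈ Finset.Icc m s,
            |b k| * h ^ (2 * (k - m)) * ((L ^ k *ᵥ u) ⬝ᵥ (H *ᵥ (L ^ k *ᵥ u))) :=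
  energy_error_order_general H L hH hL s a h ha0 G hG b hb m hm1 hbvanish u
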